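/- arXiv:math/0305418 — 4 statements merged into one kernel-verified Lean document; each statement's English description precedes it below -/
import Mathlib

section
/- The presented group on four generators x₁, x₂, x₃, x₄ with defining relations x₄x₃x₂x₁ = e, x₃ = x₄, (x₂x₄)² = (x₄x₂)², x₁ = x₄x₂x₄⁻¹, x₁ = x₃x₂x₃⁻¹, (x₂x₃)² = (x₃x₂)² is isomorphic to the presented group ⟨a, b | (ab)² = (ba)² = e⟩. -/
/-!
Tietze elimination: the relations `x₃ = x₄` and `x₁ = x₄x₂x₄⁻¹` remove `x₃` and `x₁`. The first
relation then reads `x₄(x₄x₂)²x₄⁻¹ = e`, i.e. `(x₄x₂)² = e`, so the third one gives `(x₂x₄)² = e`,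
and the remaining relations become trivial. Hence `a ↦ x₄`, `b ↦ x₂` is an isomorphism.
-/

namespace Stmt1

/-- Generators `x₁, x₂, x₃, x₄` of the free group, indexed by `0, 1, 2, 3`. -/
def x (i : Fin 4) : FreeGroup (Fin 4) := FreeGroup.of i

/-- The relators corresponding to the defining relations
`x₄x₃x₂x₁ = e`, `x₃ = x₄`, `(x₂x₄)² = (x₄x₂)²`, `x₁ = x₄x₂x₄⁻¹`,
`x₁ = x₃x₂x₃⁻¹`, `(x₂x₃)² = (x₃x₂)²`. -/
def rels : Set (FreeGroup (Fin 4)) :=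
  { x 3 * x 2 * x 1 * x 0,
    x 2 * (x 3)⁻¹,
    (x 1 * x 3) ^ 2 * ((x 3 * x 1) ^ 2)⁻¹,
    x 0 * (x 3 * x 1 * (x 3)⁻¹)⁻¹,
    x 0 * (x 2 * x 1 * (x 2)⁻¹)⁻¹,
    (x 1 * x 2) ^ 2 * ((x 2 * x 1) ^ 2)⁻¹ }

/-- The relators `(ab)²` and `(ba)²` of the presentation `⟨a, b | (ab)² = (ba)² = e⟩`. -/
def rels' : Set (FreeGroup (Fin 2)) :=
  {(FreeGroup.of 0 * FreeGroup.of 1) ^ 2, (FreeGroup.of 1 * FreeGroup.of 0) ^ 2}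

open PresentedGroup

-- `mk rels (x i * x j)` is definitionally `of i * of j`, so each relation is read off a relator
-- without rewriting.
namespace rels

theorem of_two_eq_of_three : (of 2 : PresentedGroup rels) = of 3 :=
  mk_eq_mk_of_mul_inv_mem (x := x 2) (y := x 3) (by simp [rels])

theorem of_zero_eq_conj : (of 0 : PresentedGroup rels) = of 3 * of 1 * (of 3)⁻¹ :=
  mk_eq_mk_of_mul_inv_mem (x := x 0) (y := x 3 * x 1 * (x 3)⁻¹) (by simp [rels])

theorem of_three_mul_of_one_sq : (of 3 * of 1 : PresentedGroup rels) ^ 2 = 1 := by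
  have h : (of 3 * of 2 * of 1 * of 0 : PresentedGroup rels) = 1 :=
    one_of_mem (x := x 3 * x 2 * x 1 * x 0) (by simp [rels])
  rw [of_two_eq_of_three, of_zero_eq_conj] at h
  rw [← conj_eq_one_iff (a := of 3), ← h, sq]
  group

theorem of_one_mul_of_three_sq : (of 1 * of 3 : PresentedGroup rels) ^ 2 = 1 :=
  (mk_eq_mk_of_mul_inv_mem (x := (x 1 * x 3) ^ 2) (y := (x 3 * x 1) ^ 2) (by simp [rels])).trans
    of_three_mul_of_one_sq

end rels

namespace rels'

theorem of_zero_mul_of_one_sq : (of 0 * of 1 : PresentedGroup rels') ^ 2 = 1 :=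
  one_of_mem (x := (FreeGroup.of 0 * FreeGroup.of 1) ^ 2) (by simp [rels'])

theorem of_one_mul_of_zero_sq : (of 1 * of 0 : PresentedGroup rels') ^ 2 = 1 :=
  one_of_mem (x := (FreeGroup.of 1 * FreeGroup.of 0) ^ 2) (by simp [rels'])

end rels'

noncomputable def rels.toRels' : PresentedGroup rels →* PresentedGroup rels' :=
  toGroup (f := ![of 0 * of 1 * (of 0)⁻¹, of 1, of 0, of 0]) <| by
    rintro r (rfl | rfl | rfl | rfl | rfl | rfl)
    case inl =>
      rw [← conj_eq_one_iff (a := (of 0)⁻¹), ← rels'.of_zero_mul_of_one_sq]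
      simp [x, sq, mul_assoc]
    all_goals simp [x, rels'.of_zero_mul_of_one_sq, rels'.of_one_mul_of_zero_sq]

noncomputable def rels'.toRels : PresentedGroup rels' →* PresentedGroup rels :=
  toGroup (f := ![of 3, of 1]) <| by
    rintro r (rfl | rfl) <;>
      simp [rels.of_three_mul_of_one_sq, rels.of_one_mul_of_three_sq]

theorem presentation_iso :
    Nonempty (PresentedGroup rels ≃* PresentedGroup rels') := by
  refine ⟨MonoidHom.toMulEquiv rels.toRels' rels'.toRels ?_ ?_⟩ <;> ext i <;> fin_cases i <;>
    simp [rels.toRels', rels'.toRels, rels.of_zero_eq_conj, rels.of_two_eq_of_three]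

end Stmt1
end

section
/- The presented group on six generators x₁, …, x₆ with defining relations x₆x₅x₄x₃x₂x₁ = e, x₃x₅⁻¹x₆x₅ = x₅⁻¹x₆x₅x₃, x₃⁻¹x₄x₃ = x₅⁻¹x₆⁻¹x₅x₆x₅, (x₆x₅x₂)² = (x₂x₆x₅)², (x₂x₆x₅)² = (x₅⁻¹x₆x₅x₂x₅)², x₁ = x₆x₅x₂x₅⁻¹x₆⁻¹, x₁ = x₄x₃x₂x₃⁻¹x₄⁻¹, (x₄x₃x₂)² = (x₂x₄x₃)², (x₂x₄x₃)² = (x₃x₂x₄)², x₄ = x₅ is isomorphic to the presented group on three generators x, y, z with defining relations (zyx)² = (yxz)² and (yxz)² = (xzy)². -/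
namespace Stmt6

/-- Generators `x₁, …, x₆` of the free group, indexed by `0, …, 5`. -/
def x (i : Fin 6) : FreeGroup (Fin 6) := FreeGroup.of i

/-- The relators corresponding to the ten defining relations. -/
def rels : Set (FreeGroup (Fin 6)) :=
  { x 5 * x 4 * x 3 * x 2 * x 1 * x 0,
    (x 2 * (x 4)⁻¹ * x 5 * x 4) * ((x 4)⁻¹ * x 5 * x 4 * x 2)⁻¹,
    ((x 2)⁻¹ * x 3 * x 2) * ((x 4)⁻¹ * (x 5)⁻¹ * x 4 * x 5 * x 4)⁻¹,
    (x 5 * x 4 * x 1) ^ 2 * ((x 1 * x 5 * x 4) ^ 2)⁻¹,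
    (x 1 * x 5 * x 4) ^ 2 * (((x 4)⁻¹ * x 5 * x 4 * x 1 * x 4) ^ 2)⁻¹,
    x 0 * (x 5 * x 4 * x 1 * (x 4)⁻¹ * (x 5)⁻¹)⁻¹,
    x 0 * (x 3 * x 2 * x 1 * (x 2)⁻¹ * (x 3)⁻¹)⁻¹,
    (x 3 * x 2 * x 1) ^ 2 * ((x 1 * x 3 * x 2) ^ 2)⁻¹,
    (x 1 * x 3 * x 2) ^ 2 * ((x 2 * x 1 * x 3) ^ 2)⁻¹,
    x 3 * (x 4)⁻¹ }

/-- Generators `x, y, z` of the free group on three generators. -/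
def y (i : Fin 3) : FreeGroup (Fin 3) := FreeGroup.of i

/-- The relators of the presentation `⟨x, y, z | (zyx)² = (yxz)² = (xzy)²⟩`. -/
def rels' : Set (FreeGroup (Fin 3)) :=
  { (y 2 * y 1 * y 0) ^ 2 * ((y 1 * y 0 * y 2) ^ 2)⁻¹,
    (y 1 * y 0 * y 2) ^ 2 * ((y 0 * y 2 * y 1) ^ 2)⁻¹ }

/-! ### Auxiliary lemmas -/

lemma mk_rel {α : Type*} {rs : Set (FreeGroup α)} {r : FreeGroup α} (h : r ∈ rs) :
    PresentedGroup.mk rs r = 1 :=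
  (QuotientGroup.eq_one_iff r).mpr (Subgroup.subset_normalClosure h)

lemma mk_of {α : Type*} {rs : Set (FreeGroup α)} (i : α) :
    PresentedGroup.mk rs (FreeGroup.of i) = PresentedGroup.of i := rfl

section Abstract

variable {G : Type*} [Group G] (X Y Z : G)
  (h1 : (Z * Y * X) ^ 2 = (Y * X * Z) ^ 2)
  (h2 : (Y * X * Z) ^ 2 = (X * Z * Y) ^ 2)

include h1 in
lemma kZ : Commute ((Z * Y * X) ^ 2) Z := by
  have h : (Z * Y * X) ^ 2 * Z = Z * (Y * X * Z) ^ 2 := by simp only [pow_two]; group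
  rw [commute_iff_eq, h, ← h1]

include h1 h2 in
lemma kY : Commute ((Z * Y * X) ^ 2) Y := by
  have h : Y * (X * Z * Y) ^ 2 = (Y * X * Z) ^ 2 * Y := by simp only [pow_two]; group
  rw [commute_iff_eq, h1, ← h, h2]

include h1 h2 in
lemma kX : Commute ((Z * Y * X) ^ 2) X := by
  have h : X * (Z * Y * X) ^ 2 = (X * Z * Y) ^ 2 * X := by simp only [pow_two]; group
  rw [commute_iff_eq, h, h1, h2]

include h1 h2 in
lemma L2 :
    Y * Z⁻¹ * (Z * Y * ((Z * Y * X) ^ 2)⁻¹ * Z⁻¹) * Z *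
      (Z⁻¹ * (Z * Y * ((Z * Y * X) ^ 2)⁻¹ * Z⁻¹) * Z * Y)⁻¹ = 1 := by
  calc Y * Z⁻¹ * (Z * Y * ((Z * Y * X) ^ 2)⁻¹ * Z⁻¹) * Z *
      (Z⁻¹ * (Z * Y * ((Z * Y * X) ^ 2)⁻¹ * Z⁻¹) * Z * Y)⁻¹
      = Y * Y * (((Z * Y * X) ^ 2)⁻¹ * Y⁻¹) * (Z * Y * X) ^ 2 * Y⁻¹ := by simp only [pow_two]; group
    _ = Y * Y * (Y⁻¹ * ((Z * Y * X) ^ 2)⁻¹) * (Z * Y * X) ^ 2 * Y⁻¹ := by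
        rw [((kY X Y Z h1 h2).inv_left.inv_right).eq]
    _ = 1 := by simp only [pow_two]; group

include h1 h2 in
lemma L3 :
    Y⁻¹ * Z * Y *
      (Z⁻¹ * (Z * Y * ((Z * Y * X) ^ 2)⁻¹ * Z⁻¹)⁻¹ * Z *
        (Z * Y * ((Z * Y * X) ^ 2)⁻¹ * Z⁻¹) * Z)⁻¹ = 1 := by
  calc Y⁻¹ * Z * Y *
      (Z⁻¹ * (Z * Y * ((Z * Y * X) ^ 2)⁻¹ * Z⁻¹)⁻¹ * Z *
        (Z * Y * ((Z * Y * X) ^ 2)⁻¹ * Z⁻¹) * Z)⁻¹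
      = Y⁻¹ * Z * Y * ((Z * Y * X) ^ 2 * Y⁻¹) * Z⁻¹ * Y * ((Z * Y * X) ^ 2)⁻¹ := by simp only [pow_two]; group
    _ = Y⁻¹ * Z * Y * (Y⁻¹ * (Z * Y * X) ^ 2) * Z⁻¹ * Y * ((Z * Y * X) ^ 2)⁻¹ := by
        rw [(kY X Y Z h1 h2).inv_right.eq]
    _ = Y⁻¹ * Z * ((Z * Y * X) ^ 2 * Z⁻¹) * Y * ((Z * Y * X) ^ 2)⁻¹ := by simp only [pow_two]; group
    _ = Y⁻¹ * Z * (Z⁻¹ * (Z * Y * X) ^ 2) * Y * ((Z * Y * X) ^ 2)⁻¹ := by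
        rw [(kZ X Y Z h1).inv_right.eq]
    _ = Y⁻¹ * ((Z * Y * X) ^ 2 * Y) * ((Z * Y * X) ^ 2)⁻¹ := by simp only [pow_two]; group
    _ = Y⁻¹ * (Y * (Z * Y * X) ^ 2) * ((Z * Y * X) ^ 2)⁻¹ := by
        rw [(kY X Y Z h1 h2).eq]
    _ = 1 := by simp only [pow_two]; group

include h1 h2 in
lemma e4a :
    (Z * Y * ((Z * Y * X) ^ 2)⁻¹ * Z⁻¹ * Z * X) ^ 2 = ((Z * Y * X) ^ 2)⁻¹ := by
  calc (Z * Y * ((Z * Y * X) ^ 2)⁻¹ * Z⁻¹ * Z * X) ^ 2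
      = Z * Y * (((Z * Y * X) ^ 2)⁻¹ * X) * Z * Y * (((Z * Y * X) ^ 2)⁻¹ * X) := by simp only [pow_two]; group
    _ = Z * Y * (X * ((Z * Y * X) ^ 2)⁻¹) * Z * Y * (X * ((Z * Y * X) ^ 2)⁻¹) := by
        rw [(kX X Y Z h1 h2).inv_left.eq]
    _ = Z * Y * X * (((Z * Y * X) ^ 2)⁻¹ * Z) * Y * X * ((Z * Y * X) ^ 2)⁻¹ := by simp only [pow_two]; group
    _ = Z * Y * X * (Z * ((Z * Y * X) ^ 2)⁻¹) * Y * X * ((Z * Y * X) ^ 2)⁻¹ := by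
        rw [(kZ X Y Z h1).inv_left.eq]
    _ = Z * Y * X * Z * (((Z * Y * X) ^ 2)⁻¹ * Y) * X * ((Z * Y * X) ^ 2)⁻¹ := by simp only [pow_two]; group
    _ = Z * Y * X * Z * (Y * ((Z * Y * X) ^ 2)⁻¹) * X * ((Z * Y * X) ^ 2)⁻¹ := by
        rw [(kY X Y Z h1 h2).inv_left.eq]
    _ = Z * Y * X * Z * Y * (((Z * Y * X) ^ 2)⁻¹ * X) * ((Z * Y * X) ^ 2)⁻¹ := by simp only [pow_two]; group
    _ = Z * Y * X * Z * Y * (X * ((Z * Y * X) ^ 2)⁻¹) * ((Z * Y * X) ^ 2)⁻¹ := by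
        rw [(kX X Y Z h1 h2).inv_left.eq]
    _ = ((Z * Y * X) ^ 2)⁻¹ := by simp only [pow_two]; group

include h1 h2 in
lemma e4b :
    (X * (Z * Y * ((Z * Y * X) ^ 2)⁻¹ * Z⁻¹) * Z) ^ 2 = ((Z * Y * X) ^ 2)⁻¹ := by
  calc (X * (Z * Y * ((Z * Y * X) ^ 2)⁻¹ * Z⁻¹) * Z) ^ 2
      = X * Z * Y * (((Z * Y * X) ^ 2)⁻¹ * X) * Z * Y * ((Z * Y * X) ^ 2)⁻¹ := by simp only [pow_two]; group
    _ = X * Z * Y * (X * ((Z * Y * X) ^ 2)⁻¹) * Z * Y * ((Z * Y * X) ^ 2)⁻¹ := by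
        rw [(kX X Y Z h1 h2).inv_left.eq]
    _ = X * Z * Y * X * (((Z * Y * X) ^ 2)⁻¹ * Z) * Y * ((Z * Y * X) ^ 2)⁻¹ := by simp only [pow_two]; group
    _ = X * Z * Y * X * (Z * ((Z * Y * X) ^ 2)⁻¹) * Y * ((Z * Y * X) ^ 2)⁻¹ := by
        rw [(kZ X Y Z h1).inv_left.eq]
    _ = X * Z * Y * X * Z * (((Z * Y * X) ^ 2)⁻¹ * Y) * ((Z * Y * X) ^ 2)⁻¹ := by simp only [pow_two]; group
    _ = X * Z * Y * X * Z * (Y * ((Z * Y * X) ^ 2)⁻¹) * ((Z * Y * X) ^ 2)⁻¹ := by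
        rw [(kY X Y Z h1 h2).inv_left.eq]
    _ = (X * Z * Y) ^ 2 * (((Z * Y * X) ^ 2)⁻¹ * ((Z * Y * X) ^ 2)⁻¹) := by simp only [pow_two]; group
    _ = ((Z * Y * X) ^ 2)⁻¹ := by rw [← h2, ← h1]; simp only [pow_two]; group

include h1 h2 in
lemma e5 :
    (Z⁻¹ * (Z * Y * ((Z * Y * X) ^ 2)⁻¹ * Z⁻¹) * Z * X * Z) ^ 2
      = ((Z * Y * X) ^ 2)⁻¹ := by
  calc (Z⁻¹ * (Z * Y * ((Z * Y * X) ^ 2)⁻¹ * Z⁻¹) * Z * X * Z) ^ 2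
      = Y * (((Z * Y * X) ^ 2)⁻¹ * X) * Z * Y * (((Z * Y * X) ^ 2)⁻¹ * X) * Z := by simp only [pow_two]; group
    _ = Y * (X * ((Z * Y * X) ^ 2)⁻¹) * Z * Y * (X * ((Z * Y * X) ^ 2)⁻¹) * Z := by
        rw [(kX X Y Z h1 h2).inv_left.eq]
    _ = Y * X * (((Z * Y * X) ^ 2)⁻¹ * Z) * Y * X * (((Z * Y * X) ^ 2)⁻¹ * Z) := by simp only [pow_two]; group
    _ = Y * X * (Z * ((Z * Y * X) ^ 2)⁻¹) * Y * X * (Z * ((Z * Y * X) ^ 2)⁻¹) := by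
        rw [(kZ X Y Z h1).inv_left.eq]
    _ = Y * X * Z * (((Z * Y * X) ^ 2)⁻¹ * Y) * X * Z * ((Z * Y * X) ^ 2)⁻¹ := by simp only [pow_two]; group
    _ = Y * X * Z * (Y * ((Z * Y * X) ^ 2)⁻¹) * X * Z * ((Z * Y * X) ^ 2)⁻¹ := by
        rw [(kY X Y Z h1 h2).inv_left.eq]
    _ = Y * X * Z * Y * (((Z * Y * X) ^ 2)⁻¹ * X) * Z * ((Z * Y * X) ^ 2)⁻¹ := by simp only [pow_two]; group
    _ = Y * X * Z * Y * (X * ((Z * Y * X) ^ 2)⁻¹) * Z * ((Z * Y * X) ^ 2)⁻¹ := by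
        rw [(kX X Y Z h1 h2).inv_left.eq]
    _ = Y * X * Z * Y * X * (((Z * Y * X) ^ 2)⁻¹ * Z) * ((Z * Y * X) ^ 2)⁻¹ := by simp only [pow_two]; group
    _ = Y * X * Z * Y * X * (Z * ((Z * Y * X) ^ 2)⁻¹) * ((Z * Y * X) ^ 2)⁻¹ := by
        rw [(kZ X Y Z h1).inv_left.eq]
    _ = (Y * X * Z) ^ 2 * (((Z * Y * X) ^ 2)⁻¹ * ((Z * Y * X) ^ 2)⁻¹) := by simp only [pow_two]; group
    _ = ((Z * Y * X) ^ 2)⁻¹ := by rw [← h1]; simp only [pow_two]; group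

include h1 h2 in
lemma L6 :
    Z * Y * X * Y⁻¹ * Z⁻¹ *
      (Z * Y * ((Z * Y * X) ^ 2)⁻¹ * Z⁻¹ * Z * X * Z⁻¹ *
        (Z * Y * ((Z * Y * X) ^ 2)⁻¹ * Z⁻¹)⁻¹)⁻¹ = 1 := by
  calc Z * Y * X * Y⁻¹ * Z⁻¹ *
      (Z * Y * ((Z * Y * X) ^ 2)⁻¹ * Z⁻¹ * Z * X * Z⁻¹ *
        (Z * Y * ((Z * Y * X) ^ 2)⁻¹ * Z⁻¹)⁻¹)⁻¹
      = Z * Y * X * (((Z * Y * X) ^ 2)⁻¹ * X⁻¹) * (Z * Y * X) ^ 2 * Y⁻¹ * Z⁻¹ := by simp only [pow_two]; group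
    _ = Z * Y * X * (X⁻¹ * ((Z * Y * X) ^ 2)⁻¹) * (Z * Y * X) ^ 2 * Y⁻¹ * Z⁻¹ := by
        rw [((kX X Y Z h1 h2).inv_left.inv_right).eq]
    _ = 1 := by simp only [pow_two]; group

end Abstract

/-! ### Relations in the two presented groups -/

lemma h1' : ((PresentedGroup.of 2 : PresentedGroup rels') * .of 1 * .of 0) ^ 2
    = ((PresentedGroup.of 1 : PresentedGroup rels') * .of 0 * .of 2) ^ 2 := by
  have := mk_rel (rs := rels') (r := (y 2 * y 1 * y 0) ^ 2 * ((y 1 * y 0 * y 2) ^ 2)⁻¹)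
    (by simp [rels'])
  simp only [y, map_mul, map_inv, map_pow, mk_of, mul_inv_eq_one] at this
  exact this

lemma h2' : ((PresentedGroup.of 1 : PresentedGroup rels') * .of 0 * .of 2) ^ 2
    = ((PresentedGroup.of 0 : PresentedGroup rels') * .of 2 * .of 1) ^ 2 := by
  have := mk_rel (rs := rels') (r := (y 1 * y 0 * y 2) ^ 2 * ((y 0 * y 2 * y 1) ^ 2)⁻¹)
    (by simp [rels'])
  simp only [y, map_mul, map_inv, map_pow, mk_of, mul_inv_eq_one] at this
  exact this

lemma rP1 : (PresentedGroup.of 5 : PresentedGroup rels) * .of 4 * .of 3 * .of 2 * .of 1 * .of 0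
    = 1 := by
  have := mk_rel (rs := rels) (r := x 5 * x 4 * x 3 * x 2 * x 1 * x 0) (by simp [rels])
  simpa only [x, map_mul, map_inv, map_pow, mk_of] using this

lemma rP7 : (PresentedGroup.of 0 : PresentedGroup rels)
    = .of 3 * .of 2 * .of 1 * (.of 2)⁻¹ * (.of 3)⁻¹ := by
  have := mk_rel (rs := rels) (r := x 0 * (x 3 * x 2 * x 1 * (x 2)⁻¹ * (x 3)⁻¹)⁻¹)
    (by simp [rels])
  simpa only [x, map_mul, map_inv, map_pow, mk_of, mul_inv_eq_one] using this

lemma rP8 : ((PresentedGroup.of 3 : PresentedGroup rels) * .of 2 * .of 1) ^ 2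
    = ((PresentedGroup.of 1 : PresentedGroup rels) * .of 3 * .of 2) ^ 2 := by
  have := mk_rel (rs := rels) (r := (x 3 * x 2 * x 1) ^ 2 * ((x 1 * x 3 * x 2) ^ 2)⁻¹)
    (by simp [rels])
  simpa only [x, map_mul, map_inv, map_pow, mk_of, mul_inv_eq_one] using this

lemma rP9 : ((PresentedGroup.of 1 : PresentedGroup rels) * .of 3 * .of 2) ^ 2
    = ((PresentedGroup.of 2 : PresentedGroup rels) * .of 1 * .of 3) ^ 2 := by
  have := mk_rel (rs := rels) (r := (x 1 * x 3 * x 2) ^ 2 * ((x 2 * x 1 * x 3) ^ 2)⁻¹)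
    (by simp [rels])
  simpa only [x, map_mul, map_inv, map_pow, mk_of, mul_inv_eq_one] using this

lemma rP10 : (PresentedGroup.of 3 : PresentedGroup rels) = .of 4 := by
  have := mk_rel (rs := rels) (r := x 3 * (x 4)⁻¹) (by simp [rels])
  simpa only [x, map_mul, map_inv, map_pow, mk_of, mul_inv_eq_one] using this

/-! ### The two homomorphisms -/

noncomputable def fgen : Fin 6 → PresentedGroup rels' :=
  ![ .of 2 * .of 1 * .of 0 * (.of 1)⁻¹ * (.of 2)⁻¹,
     .of 0, .of 1, .of 2, .of 2,
     .of 2 * .of 1 * (((PresentedGroup.of 2 : PresentedGroup rels') * .of 1 * .of 0) ^ 2)⁻¹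
       * (.of 2)⁻¹ ]

lemma fgen_0 : fgen 0 = .of 2 * .of 1 * .of 0 * (.of 1)⁻¹ * (.of 2)⁻¹ := rfl
lemma fgen_1 : fgen 1 = .of 0 := rfl
lemma fgen_2 : fgen 2 = .of 1 := rfl
lemma fgen_3 : fgen 3 = .of 2 := rfl
lemma fgen_4 : fgen 4 = .of 2 := rfl
lemma fgen_5 : fgen 5 = .of 2 * .of 1 *
    (((PresentedGroup.of 2 : PresentedGroup rels') * .of 1 * .of 0) ^ 2)⁻¹ * (.of 2)⁻¹ := rfl

noncomputable def ggen : Fin 3 → PresentedGroup rels := ![ .of 1, .of 2, .of 3 ]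

lemma ggen_0 : ggen 0 = .of 1 := rfl
lemma ggen_1 : ggen 1 = .of 2 := rfl
lemma ggen_2 : ggen 2 = .of 3 := rfl

lemma hfgen : ∀ r ∈ rels, FreeGroup.lift fgen r = 1 := by
  intro r hr
  simp only [rels, Set.mem_insert_iff, Set.mem_singleton_iff] at hr
  have h1 := h1'
  have h2 := h2'
  rcases hr with rfl|rfl|rfl|rfl|rfl|rfl|rfl|rfl|rfl|rfl <;>
    simp only [x, map_mul, map_inv, map_pow, FreeGroup.lift_apply_of,
      fgen_0, fgen_1, fgen_2, fgen_3, fgen_4, fgen_5]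
  · simp only [pow_two]; group
  · exact L2 _ _ _ h1 h2
  · exact L3 _ _ _ h1 h2
  · rw [e4a _ _ _ h1 h2, e4b _ _ _ h1 h2]; simp only [pow_two]; group
  · rw [e4b _ _ _ h1 h2, e5 _ _ _ h1 h2]; simp only [pow_two]; group
  · exact L6 _ _ _ h1 h2
  · group
  · rw [h1, h2]; simp only [pow_two]; group
  · rw [← h2]; simp only [pow_two]; group
  · group

lemma hggen : ∀ r ∈ rels', FreeGroup.lift ggen r = 1 := by
  intro r hr
  simp only [rels', Set.mem_insert_iff, Set.mem_singleton_iff] at hr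
  rcases hr with rfl|rfl <;>
    simp only [y, map_mul, map_inv, map_pow, FreeGroup.lift_apply_of, ggen_0, ggen_1, ggen_2]
  · rw [rP8, rP9]; simp only [pow_two]; group
  · rw [← rP9]; simp only [pow_two]; group

noncomputable def φ : PresentedGroup rels →* PresentedGroup rels' :=
  PresentedGroup.toGroup hfgen

noncomputable def ψ : PresentedGroup rels' →* PresentedGroup rels :=
  PresentedGroup.toGroup hggen

lemma c5 : (PresentedGroup.of 3 : PresentedGroup rels) * .of 2 *
    (((PresentedGroup.of 3 : PresentedGroup rels) * .of 2 * .of 1) ^ 2)⁻¹ * (.of 3)⁻¹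
    = .of 5 := by
  have e : (PresentedGroup.of 5 : PresentedGroup rels) * .of 4 * .of 3 * .of 2 * .of 1 * .of 0
      = 1 := rP1
  rw [← rP10, rP7] at e
  have e' : (PresentedGroup.of 5 : PresentedGroup rels) *
      (.of 3 * .of 3 * .of 2 * .of 1 * (.of 3 * .of 2 * .of 1 * (.of 2)⁻¹ * (.of 3)⁻¹)) = 1 := by
    rw [← e]; group
  rw [eq_inv_of_mul_eq_one_left e']
  simp only [pow_two]; group

theorem presentation_iso :
    Nonempty (PresentedGroup rels ≃* PresentedGroup rels') := by
  refine ⟨MonoidHom.toMulEquiv φ ψ ?_ ?_⟩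
  · ext i
    simp only [MonoidHom.comp_apply, MonoidHom.id_apply, φ, ψ, PresentedGroup.toGroup.of]
    fin_cases i
    · exact rP7.symm
    · rfl
    · rfl
    · rfl
    · exact rP10
    · exact c5
  · ext i
    simp only [MonoidHom.comp_apply, MonoidHom.id_apply, φ, ψ, PresentedGroup.toGroup.of]
    fin_cases i
    · rfl
    · rfl
    · rfl

end Stmt6
end

section
/- Let G be a group and x₁, x₂, x₃ ∈ G. If x₁x₃x₂ = x₃x₂x₁ and x₃x₂x₁x₃x₂ = x₂x₃x₂x₁x₃, then x₂x₁x₃x₂x₃ = x₃x₂x₁x₃x₂. (In other words, the third van Kampen relation x₃ = x₃x₂x₁x₃x₂x₃x₂⁻¹x₃⁻¹x₁⁻¹x₂⁻¹x₃⁻¹ induced by the singular point (2x+y)(y+x²)(y−x²)=0 is a consequence of the first two relations x₁ = x₃x₂x₁x₂⁻¹x₃⁻¹ and x₂ = x₃x₂x₁x₃x₂x₃⁻¹x₁⁻¹x₂⁻¹x₃⁻¹.) -/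
/-- In any group, the relation `x₂x₁x₃x₂x₃ = x₃x₂x₁x₃x₂` follows from
`x₁x₃x₂ = x₃x₂x₁` and `x₃x₂x₁x₃x₂ = x₂x₃x₂x₁x₃`. -/
theorem third_relation_redundant {G : Type*} [Group G] (x₁ x₂ x₃ : G)
    (h1 : x₁ * x₃ * x₂ = x₃ * x₂ * x₁)
    (h2 : x₃ * x₂ * x₁ * x₃ * x₂ = x₂ * x₃ * x₂ * x₁ * x₃) :
    x₂ * x₁ * x₃ * x₂ * x₃ = x₃ * x₂ * x₁ * x₃ * x₂ := by
  have : x₂ * (x₁ * x₃ * x₂) * x₃ = x₂ * (x₃ * x₂ * x₁) * x₃ := by rw [h1]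
  calc x₂ * x₁ * x₃ * x₂ * x₃ = x₂ * (x₁ * x₃ * x₂) * x₃ := by group
    _ = x₂ * (x₃ * x₂ * x₁) * x₃ := this
    _ = x₂ * x₃ * x₂ * x₁ * x₃ := by group
    _ = x₃ * x₂ * x₁ * x₃ * x₂ := h2.symm
end

section
/- Let G be a group and x₁, x₂, x₃, x₄, x₅ ∈ G. Then the five relations x₁ = x₄x₃x₄⁻¹, x₂ = x₄x₃x₂x₃⁻¹x₄⁻¹, x₃ = x₄x₃x₂x₁x₂⁻¹x₃⁻¹x₄⁻¹, x₄ = x₅, x₅ = x₅x₄x₃x₂x₁x₄x₁⁻¹x₂⁻¹x₃⁻¹x₄⁻¹x₅⁻¹ hold simultaneously if and only if the four relations x₄x₃x₂ = x₂x₄x₃, x₃x₂x₄x₃x₄ = x₄x₃x₂x₄x₃, x₁ = x₄x₃x₄⁻¹, x₄ = x₅ hold simultaneously. -/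
/-- Simplification of the van Kampen relations induced by the singular point with
local equation `y(y²+x)(y²−x) = 0`. -/
theorem vanKampen_relations_simplification {G : Type*} [Group G] (x₁ x₂ x₃ x₄ x₅ : G) :
    (x₁ = x₄ * x₃ * x₄⁻¹ ∧
      x₂ = x₄ * x₃ * x₂ * x₃⁻¹ * x₄⁻¹ ∧
      x₃ = x₄ * x₃ * x₂ * x₁ * x₂⁻¹ * x₃⁻¹ * x₄⁻¹ ∧
      x₄ = x₅ ∧
      x₅ = x₅ * x₄ * x₃ * x₂ * x₁ * x₄ * x₁⁻¹ * x₂⁻¹ * x₃⁻¹ * x₄⁻¹ * x₅⁻¹) ↔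
    (x₄ * x₃ * x₂ = x₂ * x₄ * x₃ ∧
      x₃ * x₂ * x₄ * x₃ * x₄ = x₄ * x₃ * x₂ * x₄ * x₃ ∧
      x₁ = x₄ * x₃ * x₄⁻¹ ∧
      x₄ = x₅) := by
  constructor
  · rintro ⟨h1, h2, h3, h4, h5⟩
    subst h1
    subst h4
    rw [eq_mul_inv_iff_mul_eq, eq_mul_inv_iff_mul_eq] at h2
    rw [eq_mul_inv_iff_mul_eq, eq_mul_inv_iff_mul_eq, eq_mul_inv_iff_mul_eq] at h3
    -- h2 : x₂ * x₄ * x₃ = x₄ * x₃ * x₂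
    -- h3 : x₃ * x₄ * x₃ * x₂ = x₄ * x₃ * x₂ * (x₄ * x₃ * x₄⁻¹)
    have r1 : x₄ * x₃ * x₂ = x₂ * x₄ * x₃ := h2.symm
    refine ⟨r1, ?_, rfl, rfl⟩
    calc x₃ * x₂ * x₄ * x₃ * x₄ = x₃ * (x₄ * x₃ * x₂) * x₄ := by rw [r1]; group
      _ = (x₃ * x₄ * x₃ * x₂) * x₄ := by group
      _ = (x₄ * x₃ * x₂ * (x₄ * x₃ * x₄⁻¹)) * x₄ := by rw [h3]
      _ = x₄ * x₃ * x₂ * x₄ * x₃ := by group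
  · rintro ⟨g1, g2, g3, g4⟩
    subst g3
    subst g4
    have hD : (x₄ * x₃ * x₂ * x₄ * x₃) * x₄ = x₄ * (x₄ * x₃ * x₂ * x₄ * x₃) := by
      calc (x₄ * x₃ * x₂ * x₄ * x₃) * x₄ = x₄ * (x₃ * x₂ * x₄ * x₃ * x₄) := by group
        _ = x₄ * (x₄ * x₃ * x₂ * x₄ * x₃) := by rw [g2]
    have g2' : x₃ * x₂ * x₄ * x₃ = x₄ * x₃ * x₂ * x₄ * x₃ * x₄⁻¹ := by
      rw [eq_mul_inv_iff_mul_eq]; exact g2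
    refine ⟨rfl, ?_, ?_, rfl, ?_⟩
    · rw [eq_mul_inv_iff_mul_eq, eq_mul_inv_iff_mul_eq]; exact g1.symm
    · rw [eq_mul_inv_iff_mul_eq, eq_mul_inv_iff_mul_eq, eq_mul_inv_iff_mul_eq]
      calc x₃ * x₄ * x₃ * x₂ = x₃ * (x₄ * x₃ * x₂) := by group
        _ = x₃ * (x₂ * x₄ * x₃) := by rw [g1]
        _ = x₃ * x₂ * x₄ * x₃ := by group
        _ = x₄ * x₃ * x₂ * x₄ * x₃ * x₄⁻¹ := g2'
        _ = x₄ * x₃ * x₂ * (x₄ * x₃ * x₄⁻¹) := by group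
    · symm
      calc x₄ * x₄ * x₃ * x₂ * (x₄ * x₃ * x₄⁻¹) * x₄ * (x₄ * x₃ * x₄⁻¹)⁻¹ * x₂⁻¹ * x₃⁻¹ * x₄⁻¹ * x₄⁻¹
          = x₄ * ((x₄ * x₃ * x₂ * x₄ * x₃) * x₄) * ((x₄ * x₃ * x₂ * x₄ * x₃)⁻¹ * x₄⁻¹) := by group
        _ = x₄ * (x₄ * (x₄ * x₃ * x₂ * x₄ * x₃)) * ((x₄ * x₃ * x₂ * x₄ * x₃)⁻¹ * x₄⁻¹) := by rw [hD]
        _ = x₄ := by group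
end
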